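/- Let J be the derivative (Jacobian matrix) of the vector field F₂ at the point M₄ = (0, 1, 0, 0), i.e. J = [[−1, 0, 0, 0], [−1/6, −1, 0, 0], [0, 0, −1, 0], [1/4, 0, −1/10, −1]]. Then the characteristic polynomial of J is (X + 1)⁴, and J·(0, 1, 0, 1)ᵀ = (−1)·(0, 1, 0, 1)ᵀ; that is, M₄ is a degenerate stable rest point of the order n = 2 STV ODE with sole eigenvalue λ_M = −1 and eigenvector R_M = (0, 1, 0, 1). -/
import Mathlib


open Polynomial

/-- The vector field of the order `n = 2` STV ODE, `u = (z₂, w₀, z₄, w₂)`. -/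
noncomputable def F2 (u : Fin 4 → ℝ) : Fin 4 → ℝ :=
  ![2 * u 0 - 3 * u 0 * u 1,
    -(1 / 6) * u 0 + u 1 - (u 1) ^ 2,
    (5 / 12) * (u 0) ^ 2 * u 1 + 4 * u 2 - 5 * u 1 * u 2 - 5 * u 0 * u 3,
    -(1 / 24) * (u 0) ^ 2 + (1 / 4) * u 0 * (u 1) ^ 2 - (1 / 10) * u 2
      + 3 * u 3 - 4 * u 1 * u 3]

/-- The Jacobian matrix of `F2` at the rest point `M₄ = (0, 1, 0, 0)`. -/
noncomputable def JM4 : Matrix (Fin 4) (Fin 4) ℝ :=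
  !![-1, 0, 0, 0;
     -1/6, -1, 0, 0;
     0, 0, -1, 0;
     1/4, 0, -1/10, -1]

set_option maxHeartbeats 1000000 in
theorem jacobian_F2_at_M4_degenerate :
    HasFDerivAt F2 (LinearMap.toContinuousLinearMap JM4.mulVecLin) ![0, 1, 0, 0] ∧
    JM4.charpoly = (X + C 1) ^ 4 ∧
    JM4.mulVec ![0, 1, 0, 1] = (-1 : ℝ) • ![0, 1, 0, 1] := by
  refine ⟨?_, ?_, ?_⟩
  · rw [hasFDerivAt_pi']
    intro i
    set x : Fin 4 → ℝ := ![0, 1, 0, 0] with hx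
    have h : ∀ j : Fin 4, HasFDerivAt (fun u : Fin 4 → ℝ => u j)
        (ContinuousLinearMap.proj j : (Fin 4 → ℝ) →L[ℝ] ℝ) x := fun j => hasFDerivAt_apply j x
    fin_cases i
    · have d := ((h 0).const_mul 2).sub (((h 0).mul (h 1)).const_mul 3)
      refine HasFDerivAt.congr_fderiv (d.congr_of_eventuallyEq
        (Filter.Eventually.of_forall fun u => by simp [F2]; ring)) ?_
      ext v
      simp [JM4, Matrix.mulVecLin, Matrix.mulVec, dotProduct, Fin.sum_univ_four, hx]
      ring
    · have d := (((h 0).const_mul (-(1/6))).add (h 1)).sub ((h 1).mul (h 1))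
      refine HasFDerivAt.congr_fderiv (d.congr_of_eventuallyEq
        (Filter.Eventually.of_forall fun u => by simp [F2]; ring)) ?_
      ext v
      simp [JM4, Matrix.mulVecLin, Matrix.mulVec, dotProduct, Fin.sum_univ_four, hx]
      ring
    · have dA := (((h 0).mul (h 0)).const_mul (5/12)).mul (h 1)
      have d := ((dA.add ((h 2).const_mul 4)).sub (((h 1).mul (h 2)).const_mul 5)).sub
        (((h 0).mul (h 3)).const_mul 5)
      refine HasFDerivAt.congr_fderiv (d.congr_of_eventuallyEq
        (Filter.Eventually.of_forall fun u => by simp [F2]; ring)) ?_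
      ext v
      simp [JM4, Matrix.mulVecLin, Matrix.mulVec, dotProduct, Fin.sum_univ_four, hx]
      ring
    · have dA := ((h 0).mul (h 0)).const_mul (-(1/24))
      have dB := ((h 0).mul ((h 1).mul (h 1))).const_mul (1/4)
      have d := ((((dA.add dB).sub ((h 2).const_mul (1/10))).add ((h 3).const_mul 3)).sub
        (((h 1).mul (h 3)).const_mul 4))
      refine HasFDerivAt.congr_fderiv (d.congr_of_eventuallyEq
        (Filter.Eventually.of_forall fun u => by simp [F2]; ring)) ?_
      ext v
      simp [JM4, Matrix.mulVecLin, Matrix.mulVec, dotProduct, Fin.sum_univ_four, hx]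
      ring
  · simp [Matrix.charpoly, Matrix.det_succ_row_zero, Fin.sum_univ_succ, Matrix.charmatrix, JM4,
      Matrix.diagonal_apply, Fin.succ, Fin.castSucc]
    ring
  · funext i
    fin_cases i <;>
      simp [JM4, Matrix.mulVec, dotProduct, Fin.sum_univ_four]
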